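/- Let d, k, n be positive integers with k ≡ -1 (mod d) and n ≢ -1 (mod d), and let ζ be a primitive d-th root of unity. Then the q-binomial coefficient [n choose k]_q evaluated at q = ζ equals 0. -/

import Mathlib

open Polynomial in
/-- The Gaussian binomial coefficient `[n choose k]_q` as an integer polynomial in `q`,
defined via the `q`-Pascal recursion
`[n+1 choose k+1]_q = [n choose k]_q + q^{k+1}·[n choose k+1]_q`;
it equals `[n]_q!/([k]_q!·[n-k]_q!)`. -/
noncomputable def qbinom : ℕ → ℕ → Polynomial ℤ
  | _, 0 => 1
  | 0, _ + 1 => 0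
  | n + 1, k + 1 => qbinom n k + X ^ (k + 1) * qbinom n (k + 1)

/-!
Writing `n = k + m`, the ratio formula gives
`(1 - q^m) [k+m choose k]_q = (1 - q^(k+1)) [k+m choose k+1]_q`, which we prove from the
`q`-Pascal recursion. At a primitive `d`-th root of unity `ζ` with `d ∣ k + 1` the right side
vanishes, while `1 - ζ^m ≠ 0` because `m ≡ n + 1 (mod d)`.
-/

open Polynomial

lemma qbinom_zero_right (n : ℕ) : qbinom n 0 = 1 := by
  cases n <;> rfl

lemma qbinom_eq_zero_of_lt : ∀ {n k : ℕ}, n < k → qbinom n k = 0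
  | 0, _ + 1, _ => rfl
  | n + 1, k + 1, h => by
    rw [qbinom, qbinom_eq_zero_of_lt (by omega : n < k),
      qbinom_eq_zero_of_lt (by omega : n < k + 1)]
    ring

lemma one_sub_X_mul_qbinom_one (m : ℕ) :
    (1 - X) * qbinom m 1 = 1 - (X : ℤ[X]) ^ m := by
  induction m with
  | zero => simp [qbinom_eq_zero_of_lt]
  | succ m ih =>
    rw [qbinom, qbinom_zero_right]
    linear_combination X * ih

lemma one_sub_X_pow_mul_qbinom : ∀ m k : ℕ,
    (1 - X ^ m) * qbinom (k + m) k = (1 - (X : ℤ[X]) ^ (k + 1)) * qbinom (k + m) (k + 1)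
  | m, 0 => by simp [qbinom_zero_right, one_sub_X_mul_qbinom_one]
  | 0, k + 1 => by simp [qbinom_eq_zero_of_lt]
  | m + 1, k + 1 => by
    have hk := one_sub_X_pow_mul_qbinom (m + 1) k
    have hm := one_sub_X_pow_mul_qbinom m (k + 1)
    rw [show k + (m + 1) = k + m + 1 by ring] at hk
    rw [show k + 1 + m = k + m + 1 by ring] at hm
    rw [show k + 1 + (m + 1) = k + m + 1 + 1 by ring, qbinom.eq_3 (k + m + 1) k,
      qbinom.eq_3 (k + m + 1) (k + 1)]
    linear_combination hk + X ^ (k + 2) * hm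

lemma aeval_qbinom_eq_zero {R : Type*} [CommRing R] [NoZeroDivisors R] {q : R} {k m : ℕ}
    (hk : q ^ (k + 1) = 1) (hm : q ^ m ≠ 1) : aeval q (qbinom (k + m) k) = 0 := by
  have h := congrArg (aeval q) (one_sub_X_pow_mul_qbinom m k)
  simp only [map_mul, map_sub, map_one, map_pow, aeval_X, hk, sub_self, zero_mul] at h
  exact (mul_eq_zero.mp h).resolve_left (sub_ne_zero.mpr hm.symm)

theorem stmt2_general (d k n : ℕ)
    (hkmod : (k + 1) % d = 0) (hnmod : (n + 1) % d ≠ 0)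
    (ζ : ℂ) (hζ : IsPrimitiveRoot ζ d) :
    Polynomial.aeval ζ (qbinom n k) = 0 := by
  rcases lt_or_ge n k with hnk | hkn
  · simp [qbinom_eq_zero_of_lt hnk]
  obtain ⟨m, rfl⟩ := Nat.exists_eq_add_of_le hkn
  have hdk : d ∣ k + 1 := Nat.dvd_of_mod_eq_zero hkmod
  refine aeval_qbinom_eq_zero ((hζ.pow_eq_one_iff_dvd _).mpr hdk) fun hm => hnmod ?_
  have hdm : d ∣ m := (hζ.pow_eq_one_iff_dvd m).mp hm
  exact Nat.mod_eq_zero_of_dvd (by simpa [add_right_comm] using dvd_add hdk hdm)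

/-- for positive integers `d, k, n` with `k ≡ -1 (mod d)`, `n ≢ -1 (mod d)`,
and `ζ` a primitive `d`-th root of unity, `[n choose k]_q` evaluated at `q = ζ` is `0`. -/
theorem stmt2 (d k n : ℕ) (hd : 0 < d) (hk : 0 < k) (hn : 0 < n)
    (hkmod : (k + 1) % d = 0) (hnmod : (n + 1) % d ≠ 0)
    (ζ : ℂ) (hζ : IsPrimitiveRoot ζ d) :
    Polynomial.aeval ζ (qbinom n k) = 0 :=
  stmt2_general d k n hkmod hnmod ζ hζ
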